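/- Under Condition (GP+) (for some δ > 0, t > 0 and a fixed x* ∈ Sol(VI(F;X)), 4(1+δ)t⟨F(x^{k+0.5}), x^{k+0.5} - x*⟩ + ‖x^{k+0.5} - x^k‖² ≥ 0 holds along the extra-gradient iterates), with F L-Lipschitz and t ≤ 1/(√2 L), the extra-gradient iterates satisfy Σ_{k=1}^N ‖x^{k+0.5} - x^k‖² ≤ 2(1 + 1/δ)‖x¹ - x*‖², hence min_{1 ≤ k ≤ N} ‖x^{k+0.5} - x^k‖² ≤ (2/N)(1 + 1/δ)‖x¹ - x*‖². -/

import Mathlib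

/-!
Testing the two projection inequalities of an extra-gradient step at the next iterate and at
`x*`, and absorbing the Lipschitz error term by Young's inequality (this is where
`t ≤ 1/(√2 L)` enters), gives `2t⟪F(x^{k+½}), x^{k+½} - x*⟫ + ½‖x^{k+½} - x^k‖²` at most
`‖x^k - x*‖² - ‖x^{k+1} - x*‖²`.
Condition (GP+) bounds the inner product from below by `-‖x^{k+½} - x^k‖² / (4(1+δ)t)`, so
`‖x^{k+½} - x^k‖² ≤ 2(1 + 1/δ)(‖x^k - x*‖² - ‖x^{k+1} - x*‖²)`, which telescopes.
The bound on the minimum follows because a minimum is at most the average.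
-/

open scoped RealInnerProductSpace
open Finset

section ExtraGradient

variable {E : Type*} [NormedAddCommGroup E] [InnerProductSpace ℝ E]

lemma two_mul_inner_sub_sub (a b c : E) :
    2 * ⟪a - b, b - c⟫ = ‖a - c‖ ^ 2 - ‖a - b‖ ^ 2 - ‖b - c‖ ^ 2 := by
  rw [← sub_add_sub_cancel a b c, norm_add_sq_real]
  ring

lemma two_mul_inner_le_of_norm_le {t L : ℝ} (ht : 0 ≤ t) (htL : 2 * (t * L) ^ 2 ≤ 1)
    {a b p q : E} (hab : ‖a - b‖ ≤ L * ‖p‖) :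
    2 * t * ⟪a - b, q⟫ ≤ ‖q‖ ^ 2 + ‖p‖ ^ 2 / 2 :=
  calc 2 * t * ⟪a - b, q⟫ ≤ 2 * t * (L * ‖p‖ * ‖q‖) := by
        gcongr
        exact (real_inner_le_norm _ _).trans (by gcongr)
    _ ≤ ‖q‖ ^ 2 + (t * L) ^ 2 * ‖p‖ ^ 2 := by
        nlinarith [sq_nonneg (‖q‖ - t * L * ‖p‖)]
    _ ≤ ‖q‖ ^ 2 + ‖p‖ ^ 2 / 2 := by nlinarith [sq_nonneg ‖p‖]

/-- `z = P(y - t • Fy)` and `w = P(y - t • Fz)` enter only through the variational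
inequalities of the projection, tested at `w` and at `u`. -/
lemma extragradient_step_le {t L : ℝ} (ht : 0 ≤ t) (htL : 2 * (t * L) ^ 2 ≤ 1)
    {y z w u Fy Fz : E} (hLip : ‖Fz - Fy‖ ≤ L * ‖z - y‖)
    (hz : 0 ≤ ⟪w - z, z - (y - t • Fy)⟫) (hw : 0 ≤ ⟪u - w, w - (y - t • Fz)⟫) :
    2 * t * ⟪Fz, z - u⟫ + ‖z - y‖ ^ 2 / 2 ≤ ‖y - u‖ ^ 2 - ‖w - u‖ ^ 2 := by
  have hz' : 0 ≤ ⟪w - z, z - y⟫ + t * ⟪w - z, Fy⟫ := by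
    rwa [sub_sub_eq_add_sub, add_sub_right_comm, inner_add_right, real_inner_smul_right] at hz
  have hw' : 0 ≤ ⟪u - w, w - y⟫ + t * ⟪u - w, Fz⟫ := by
    rwa [sub_sub_eq_add_sub, add_sub_right_comm, inner_add_right, real_inner_smul_right] at hw
  have hsplit : ⟪Fz, z - u⟫ = ⟪Fz - Fy, z - w⟫ - ⟪w - z, Fy⟫ - ⟪u - w, Fz⟫ := by
    simp only [inner_sub_left, inner_sub_right, real_inner_comm]
    ring
  have hyoung := two_mul_inner_le_of_norm_le (q := z - w) ht htL hLip
  have hwy := two_mul_inner_sub_sub u w y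
  have hzy := two_mul_inner_sub_sub w z y
  rw [norm_sub_rev u y, norm_sub_rev u w, norm_sub_rev w z] at *
  rw [hsplit, mul_sub, mul_sub]
  linarith

end ExtraGradient

lemma sum_Icc_le_of_le_sub_succ {a d : ℕ → ℝ} {N : ℕ}
    (h : ∀ k ∈ Icc 1 N, a k ≤ d k - d (k + 1)) (hd : 0 ≤ d (N + 1)) :
    ∑ k ∈ Icc 1 N, a k ≤ d 1 := by
  have htelescope : ∑ k ∈ Icc 1 N, (d k - d (k + 1)) = d 1 - d (N + 1) := by
    clear h hd
    induction N with
    | zero => simp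
    | succ N ih => rw [sum_Icc_succ_top (by omega), ih]; ring
  linarith [sum_le_sum h]

lemma le_two_mul_one_add_inv_mul_of_gp {δ t i r D : ℝ} (hδ : 0 < δ)
    (hkey : 2 * t * i + r / 2 ≤ D) (hgp : 0 ≤ 4 * (1 + δ) * t * i + r) :
    r ≤ 2 * (1 + 1 / δ) * D := by
  have hδr : δ * r ≤ 2 * (1 + δ) * D := by nlinarith
  rw [show 2 * (1 + 1 / δ) * D = 2 * (1 + δ) * D / δ by field_simp; ring, le_div_iff₀ hδ]
  linarith

theorem stmt_19_general {n : ℕ} (X : Set (EuclideanSpace ℝ (Fin n)))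
    (F : EuclideanSpace ℝ (Fin n) → EuclideanSpace ℝ (Fin n))
    (L : ℝ) (hL : 0 < L) (hLip : ∀ u v, ‖F u - F v‖ ≤ L * ‖u - v‖)
    (t : ℝ) (ht : 0 < t) (htL : t ≤ 1 / (Real.sqrt 2 * L))
    (δ : ℝ) (hδ : 0 < δ)
    (proj : EuclideanSpace ℝ (Fin n) → EuclideanSpace ℝ (Fin n))
    (hprojmem : ∀ z, proj z ∈ X)
    (hproj : ∀ z, ∀ y ∈ X, ⟪y - proj z, proj z - z⟫ ≥ 0)
    (x xh : ℕ → EuclideanSpace ℝ (Fin n))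
    (hhalf : ∀ k, xh k = proj (x k - t • F (x k)))
    (hfull : ∀ k, x (k + 1) = proj (x k - t • F (xh k)))
    (xs : EuclideanSpace ℝ (Fin n)) (hxs : xs ∈ X)
    (N : ℕ) (hN : 1 ≤ N)
    (hGP : ∀ k, 1 ≤ k → k ≤ N →
      4 * (1 + δ) * t * ⟪F (xh k), xh k - xs⟫ + ‖xh k - x k‖ ^ 2 ≥ 0) :
    (∑ k ∈ Finset.Icc 1 N, ‖xh k - x k‖ ^ 2 ≤ 2 * (1 + 1 / δ) * ‖x 1 - xs‖ ^ 2) ∧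
    (∃ k, 1 ≤ k ∧ k ≤ N ∧
      ‖xh k - x k‖ ^ 2 ≤ (2 / (N : ℝ)) * (1 + 1 / δ) * ‖x 1 - xs‖ ^ 2) := by
  have htL' : 2 * (t * L) ^ 2 ≤ 1 :=
    calc 2 * (t * L) ^ 2 = (t * (√2 * L)) ^ 2 := by
          rw [mul_pow, mul_pow, mul_pow, Real.sq_sqrt zero_le_two]; ring
      _ ≤ 1 := pow_le_one₀ (by positivity) ((le_div_iff₀ (by positivity)).mp htL)
  have hkey (k : ℕ) : 2 * t * ⟪F (xh k), xh k - xs⟫ + ‖xh k - x k‖ ^ 2 / 2 ≤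
      ‖x k - xs‖ ^ 2 - ‖x (k + 1) - xs‖ ^ 2 :=
    extragradient_step_le ht.le htL' (hLip _ _)
      (by rw [hhalf k]; exact hproj _ _ (hfull k ▸ hprojmem _))
      (by rw [hfull k]; exact hproj _ xs hxs)
  have hsum : ∑ k ∈ Icc 1 N, ‖xh k - x k‖ ^ 2 ≤ 2 * (1 + 1 / δ) * ‖x 1 - xs‖ ^ 2 :=
    sum_Icc_le_of_le_sub_succ (d := fun k ↦ 2 * (1 + 1 / δ) * ‖x k - xs‖ ^ 2)
      (fun k hk ↦ by
        rw [← mul_sub]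
        exact le_two_mul_one_add_inv_mul_of_gp hδ (hkey k)
          (hGP k (mem_Icc.1 hk).1 (mem_Icc.1 hk).2))
      (by positivity)
  refine ⟨hsum, ?_⟩
  obtain ⟨k, hk, hle⟩ := exists_le_of_sum_le (s := Icc 1 N)
    (g := fun _ ↦ (2 / (N : ℝ)) * (1 + 1 / δ) * ‖x 1 - xs‖ ^ 2) ⟨1, by simp [hN]⟩
    (hsum.trans_eq <| by
      simp only [sum_const, Nat.card_Icc, add_tsub_cancel_right, nsmul_eq_mul]
      field_simp)
  exact ⟨k, (mem_Icc.1 hk).1, (mem_Icc.1 hk).2, hle⟩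

/-- Under Condition (GP+) along the extra-gradient iterates, with `F` L-Lipschitz and
`t ≤ 1/(√2 L)`, we have `Σ_{k=1}^N ‖x^{k+0.5} - x^k‖² ≤ 2(1 + 1/δ)‖x¹ - x*‖²`, hence
`min_{1 ≤ k ≤ N} ‖x^{k+0.5} - x^k‖² ≤ (2/N)(1 + 1/δ)‖x¹ - x*‖²`. -/
theorem stmt_19 {n : ℕ} (X : Set (EuclideanSpace ℝ (Fin n)))
    (F : EuclideanSpace ℝ (Fin n) → EuclideanSpace ℝ (Fin n))
    (hcl : IsClosed X) (hconv : Convex ℝ X)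
    (L : ℝ) (hL : 0 < L) (hLip : ∀ u v, ‖F u - F v‖ ≤ L * ‖u - v‖)
    (t : ℝ) (ht : 0 < t) (htL : t ≤ 1 / (Real.sqrt 2 * L))
    (δ : ℝ) (hδ : 0 < δ)
    (proj : EuclideanSpace ℝ (Fin n) → EuclideanSpace ℝ (Fin n))
    (hprojmem : ∀ z, proj z ∈ X)
    (hproj : ∀ z, ∀ y ∈ X, ⟪y - proj z, proj z - z⟫ ≥ 0)
    (x xh : ℕ → EuclideanSpace ℝ (Fin n)) (hx1 : x 1 ∈ X)
    (hhalf : ∀ k, xh k = proj (x k - t • F (x k)))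
    (hfull : ∀ k, x (k + 1) = proj (x k - t • F (xh k)))
    (xs : EuclideanSpace ℝ (Fin n)) (hxs : xs ∈ X)
    (hsol : ∀ y ∈ X, ⟪F xs, y - xs⟫ ≥ 0)
    (N : ℕ) (hN : 1 ≤ N)
    (hGP : ∀ k, 1 ≤ k → k ≤ N →
      4 * (1 + δ) * t * ⟪F (xh k), xh k - xs⟫ + ‖xh k - x k‖ ^ 2 ≥ 0) :
    (∑ k ∈ Finset.Icc 1 N, ‖xh k - x k‖ ^ 2 ≤ 2 * (1 + 1 / δ) * ‖x 1 - xs‖ ^ 2) ∧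
    (∃ k, 1 ≤ k ∧ k ≤ N ∧
      ‖xh k - x k‖ ^ 2 ≤ (2 / (N : ℝ)) * (1 + 1 / δ) * ‖x 1 - xs‖ ^ 2) :=
  stmt_19_general X F L hL hLip t ht htL δ hδ proj hprojmem hproj x xh hhalf hfull xs hxs N hN hGP
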